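/- Let 𝔛 be a symmetric association scheme of class d ≥ 2 such that θ*_0, θ*_1, …, θ*_d are mutually distinct, set K_i = ∏_{j=1, j≠i}^d (θ*_0 − θ*_j)/(θ*_i − θ*_j), and suppose there exists l ∈ {2, 3, …, d} such that K_i = −p_i(l) for every i ∈ {1, …, d}. Then (|X|E_1)^{∘j} E_l = 0 for every j ∈ {0, 1, …, d−1}, where (|X|E_1)^{∘j} denotes the j-fold Hadamard power (with 0-th power the all-ones matrix J). -/

import Mathlib

open Matrix BigOperators Finset

/-- A symmetric association scheme of class `d` on a finite vertex set `V`,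
bundled together with its adjacency matrices, primitive idempotents,
eigenmatrices `P`, `Q` and Krein parameters. -/
structure SymmAssocScheme (d : ℕ) (V : Type*) [Fintype V] [DecidableEq V] where
  /-- the relations `R_0, …, R_d` -/
  R : Fin (d + 1) → Set (V × V)
  R_nonempty : ∀ i, (R i).Nonempty
  R_zero : R 0 = {p : V × V | p.1 = p.2}
  R_cover : ∀ p : V × V, ∃ i, p ∈ R i
  R_disjoint : ∀ i j, i ≠ j → R i ∩ R j = ∅
  R_symm : ∀ i, ∀ x y : V, (x, y) ∈ R i → (y, x) ∈ R i
  /-- the intersection numbers `p_{ij}^k` -/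
  pnum : Fin (d + 1) → Fin (d + 1) → Fin (d + 1) → ℕ
  pnum_spec : ∀ i j k, ∀ x y : V, (x, y) ∈ R k →
    pnum i j k = {z : V | (x, z) ∈ R i ∧ (z, y) ∈ R j}.ncard
  /-- the adjacency matrices `A_0, …, A_d` -/
  A : Fin (d + 1) → Matrix V V ℂ
  A_of_mem : ∀ i, ∀ x y : V, (x, y) ∈ R i → A i x y = 1
  A_of_not_mem : ∀ i, ∀ x y : V, (x, y) ∉ R i → A i x y = 0
  /-- the primitive idempotents `E_0, …, E_d` -/
  E : Fin (d + 1) → Matrix V V ℂ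
  E_zero : E 0 = (Fintype.card V : ℂ)⁻¹ • Matrix.of (fun _ _ => (1 : ℂ))
  E_sum : ∑ i, E i = (1 : Matrix V V ℂ)
  E_mul : ∀ i j, E i * E j = if i = j then E i else 0
  E_ne_zero : ∀ i, E i ≠ 0
  /-- the first eigenmatrix: `P i j = p_i(j)` -/
  P : Fin (d + 1) → Fin (d + 1) → ℝ
  /-- the second eigenmatrix: `Q i j = q_i(j)`; in particular `θ*_j = Q 1 j` -/
  Q : Fin (d + 1) → Fin (d + 1) → ℝ
  A_eq : ∀ i, A i = ∑ j, (P i j : ℂ) • E j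
  E_eq : ∀ i, E i = (Fintype.card V : ℂ)⁻¹ • ∑ j, (Q i j : ℂ) • A j
  /-- the Krein parameters `q_{ij}^k` -/
  krein : Fin (d + 1) → Fin (d + 1) → Fin (d + 1) → ℝ
  krein_spec : ∀ i j, Matrix.hadamard (E i) (E j) =
    (Fintype.card V : ℂ)⁻¹ • ∑ k, (krein i j k : ℂ) • E k
  krein_nonneg : ∀ i j k, 0 ≤ krein i j k

namespace SymmAssocScheme

variable {d : ℕ} {V : Type*} [Fintype V] [DecidableEq V]

/-- the `h`-fold Hadamard power `E_1^{∘h}` of `E_1`, with `E_1^{∘0} = J`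
the all-ones matrix. -/
noncomputable def hadPowE1 (S : SymmAssocScheme d V) : ℕ → Matrix V V ℂ
  | 0 => Matrix.of fun _ _ => 1
  | n + 1 => Matrix.hadamard (hadPowE1 S n) (S.E 1)

/-- `N h` is the set of indices `j` such that `E_j` is a component of `E_1^{∘h}`
(i.e. `E_j · E_1^{∘h} ≠ 0`) but not a component of `E_1^{∘l}` for any `l < h`. -/
def N (S : SymmAssocScheme d V) (h : ℕ) : Set (Fin (d + 1)) :=
  {j | S.E j * S.hadPowE1 h ≠ 0 ∧ ∀ l < h, S.E j * S.hadPowE1 l = 0}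

/-- `𝔛` is `Q`-polynomial with respect to the ordering `E_{σ 0}, E_{σ 1}, …, E_{σ d}`:
for each `h` there is a polynomial `v*_h` of degree exactly `h` with
`q_{σ h}(j) = v*_h(q_1(j))` for all `j`. -/
def IsQPolyOrdering (S : SymmAssocScheme d V) (σ : Equiv.Perm (Fin (d + 1))) : Prop :=
  ∀ h : Fin (d + 1), ∃ v : Polynomial ℝ, v.degree = (h : ℕ) ∧
    ∀ j, S.Q (σ h) j = v.eval (S.Q 1 j)

/-- `𝔛` is `Q`-polynomial with respect to `E_1`: it is `Q`-polynomial with respect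
to some ordering of the form `E_0, E_1, E_{i_2}, …, E_{i_d}`. -/
def IsQPolyE1 (S : SymmAssocScheme d V) : Prop :=
  ∃ σ : Equiv.Perm (Fin (d + 1)), σ 0 = 0 ∧ σ 1 = 1 ∧ S.IsQPolyOrdering σ

/-- `𝔛` is `P`-polynomial with respect to the ordering `A_{σ 0}, A_{σ 1}, …, A_{σ d}`. -/
def IsPPolyOrdering (S : SymmAssocScheme d V) (σ : Equiv.Perm (Fin (d + 1))) : Prop :=
  ∀ h : Fin (d + 1), ∃ v : Polynomial ℝ, v.degree = (h : ℕ) ∧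
    ∀ j, S.P (σ h) j = v.eval (S.P 1 j)

/-- `𝔛` is `P`-polynomial with respect to `A_1`. -/
def IsPPolyA1 (S : SymmAssocScheme d V) : Prop :=
  ∃ σ : Equiv.Perm (Fin (d + 1)), σ 0 = 0 ∧ σ 1 = 1 ∧ S.IsPPolyOrdering σ

/-- the ratio `K_i = ∏_{j=1, j≠i}^d (θ*_0 − θ*_j)/(θ*_i − θ*_j)`,
where `θ*_j = q_1(j)`. -/
noncomputable def K (S : SymmAssocScheme d V) (i : Fin (d + 1)) : ℝ :=
  ∏ j ∈ Finset.univ.filter (fun j => j ≠ 0 ∧ j ≠ i),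
    (S.Q 1 0 - S.Q 1 j) / (S.Q 1 i - S.Q 1 j)

end SymmAssocScheme

/-!
Write `θ*_m = q_1(m)` and `n = |X|`. Entrywise, `n E_1` takes the value `θ*_m` on `R_m`, so
`(n E_1)^{∘j} = ∑_m (θ*_m)^j A_m`, and since `A_m E_l = p_m(l) E_l` this gives
`(n E_1)^{∘j} E_l = (∑_m (θ*_m)^j p_m(l)) E_l`. The weights `K_i` are the values at `θ*_0` of the
Lagrange basis polynomials on the `d` nodes `θ*_1, …, θ*_d`, so Lagrange interpolation of `x^j`
(degree `j < d`) gives `∑_{i ≥ 1} K_i (θ*_i)^j = (θ*_0)^j`. With `p_i(l) = -K_i` and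
`p_0(l) = 1` the scalar vanishes.
-/

theorem Lagrange.sum_basis_eval_mul_pow {ι : Type*} [DecidableEq ι] {s : Finset ι}
    {θ : ι → ℝ} (hθ : Set.InjOn θ s) {j : ℕ} (hj : j < #s) (x : ℝ) :
    ∑ i ∈ s, (∏ k ∈ s.erase i, (x - θ k) / (θ i - θ k)) * θ i ^ j = x ^ j := by
  have hdeg : (Polynomial.X ^ j : Polynomial ℝ).degree < #s := by
    rw [Polynomial.degree_X_pow]; exact_mod_cast hj
  have h := congrArg (Polynomial.eval x) (Lagrange.eq_interpolate hθ hdeg)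
  simp only [Lagrange.interpolate_apply, Polynomial.eval_finsetSum, Polynomial.eval_mul,
    Polynomial.eval_C, Polynomial.eval_pow, Polynomial.eval_X] at h
  rw [h]
  refine Finset.sum_congr rfl fun i _ => ?_
  rw [mul_comm, Lagrange.basis, Polynomial.eval_prod]
  congr 1
  refine Finset.prod_congr rfl fun k _ => ?_
  simp [Lagrange.basisDivisor, div_eq_inv_mul]

namespace SymmAssocScheme

variable {d : ℕ} {V : Type*} [Fintype V] [DecidableEq V]

theorem card_ne_zero (S : SymmAssocScheme d V) : (Fintype.card V : ℂ) ≠ 0 := by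
  obtain ⟨p, -⟩ := S.R_nonempty 0
  have : Nonempty V := ⟨p.1⟩
  exact_mod_cast Fintype.card_ne_zero

variable (S : SymmAssocScheme d V)

theorem sum_K_mul_pow {j : ℕ} (hθ : Function.Injective fun m : Fin (d + 1) => S.Q 1 m)
    (hj : j < d) :
    ∑ i ∈ univ.erase 0, S.K i * S.Q 1 i ^ j = S.Q 1 0 ^ j := by
  have hfilter : ∀ i, univ.filter (fun k : Fin (d + 1) => k ≠ 0 ∧ k ≠ i) =
      (univ.erase 0).erase i := by
    intro i; ext k; simp [and_comm]
  simp only [K, hfilter]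
  exact Lagrange.sum_basis_eval_mul_pow hθ.injOn (by simpa using hj) _

theorem A_apply_of_mem {x y : V} {m : Fin (d + 1)} (hm : (x, y) ∈ S.R m) (k : Fin (d + 1)) :
    S.A k x y = if k = m then 1 else 0 := by
  split_ifs with hkm
  · rw [hkm]; exact S.A_of_mem m x y hm
  · refine S.A_of_not_mem k x y fun hk => ?_
    have := S.R_disjoint k m hkm
    exact (Set.eq_empty_iff_forall_notMem.mp this) (x, y) ⟨hk, hm⟩

theorem sum_smul_A_apply_of_mem (c : Fin (d + 1) → ℂ) {x y : V} {m : Fin (d + 1)}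
    (hm : (x, y) ∈ S.R m) : (∑ k, c k • S.A k) x y = c m := by
  simp [Matrix.sum_apply, S.A_apply_of_mem hm]

theorem card_mul_E_apply_of_mem (i : Fin (d + 1)) {x y : V} {m : Fin (d + 1)}
    (hm : (x, y) ∈ S.R m) : (Fintype.card V : ℂ) * S.E i x y = S.Q i m := by
  rw [S.E_eq i, Matrix.smul_apply, smul_eq_mul, ← mul_assoc, mul_inv_cancel₀ S.card_ne_zero,
    one_mul, S.sum_smul_A_apply_of_mem _ hm]

theorem of_map_card_mul_E (i : Fin (d + 1)) (f : ℂ → ℂ) :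
    (Matrix.of fun x y : V => f ((Fintype.card V : ℂ) * S.E i x y)) =
      ∑ m, f (S.Q i m) • S.A m := by
  ext x y
  obtain ⟨m, hm⟩ := S.R_cover (x, y)
  rw [Matrix.of_apply, S.card_mul_E_apply_of_mem i hm, S.sum_smul_A_apply_of_mem _ hm]

theorem A_mul_E (m l : Fin (d + 1)) : S.A m * S.E l = (S.P m l : ℂ) • S.E l := by
  simp [S.A_eq m, Finset.sum_mul, S.E_mul]

theorem of_map_card_mul_E_mul_E (i l : Fin (d + 1)) (f : ℂ → ℂ) :
    (Matrix.of fun x y : V => f ((Fintype.card V : ℂ) * S.E i x y)) * S.E l =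
      (∑ m, f (S.Q i m) * S.P m l) • S.E l := by
  rw [S.of_map_card_mul_E, Finset.sum_mul, Finset.sum_smul]
  simp only [Matrix.smul_mul, S.A_mul_E, smul_smul]

theorem A_zero : S.A 0 = 1 := by
  ext x y
  by_cases hxy : x = y
  · subst hxy
    rw [S.A_of_mem 0 x x (by simp [S.R_zero]), Matrix.one_apply_eq]
  · rw [S.A_of_not_mem 0 x y (by simpa [S.R_zero] using hxy), Matrix.one_apply_ne hxy]

theorem P_zero (l : Fin (d + 1)) : S.P 0 l = 1 := by
  have h : ((S.P 0 l : ℂ) - 1) • S.E l = 0 := by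
    rw [sub_smul, ← S.A_mul_E, S.A_zero, one_mul, one_smul, sub_self]
  have := (smul_eq_zero.mp h).resolve_right (S.E_ne_zero l)
  exact_mod_cast sub_eq_zero.mp this

end SymmAssocScheme

theorem statement11_general {d : ℕ} {V : Type*} [Fintype V] [DecidableEq V]
    (S : SymmAssocScheme d V)
    (hθ : Function.Injective fun j : Fin (d + 1) => S.Q 1 j)
    (l : Fin (d + 1))
    (hK : ∀ i : Fin (d + 1), i ≠ 0 → S.K i = -S.P i l) :
    ∀ j : ℕ, j < d →
      (Matrix.of fun x y : V => ((Fintype.card V : ℂ) * S.E 1 x y) ^ j) * S.E l = 0 := by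
  intro j hj
  have hscalar : ∑ m, S.Q 1 m ^ j * S.P m l = 0 := by
    have hK' : ∑ i ∈ univ.erase 0, S.Q 1 i ^ j * S.P i l = -(S.Q 1 0 ^ j) := by
      rw [← S.sum_K_mul_pow hθ hj, ← Finset.sum_neg_distrib]
      refine Finset.sum_congr rfl fun i hi => ?_
      rw [hK i (Finset.ne_of_mem_erase hi)]
      ring
    rw [← Finset.add_sum_erase _ _ (Finset.mem_univ 0), hK', S.P_zero, mul_one, add_neg_cancel]
  have hscalarℂ : ∑ m, (S.Q 1 m : ℂ) ^ j * S.P m l = 0 := by exact_mod_cast hscalar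
  rw [S.of_map_card_mul_E_mul_E 1 l (· ^ j), hscalarℂ, zero_smul]

/-- Suppose `𝔛` has class `d ≥ 2`, `θ*_0, …, θ*_d` are mutually
distinct, and there is `l ∈ {2, …, d}` with `K_i = −p_i(l)` for all `i ∈ {1, …, d}`.
Then `(|X|E_1)^{∘j} E_l = 0` for every `j ∈ {0, …, d−1}`, where `(|X|E_1)^{∘j}` is the
`j`-fold entrywise power (the `0`-th power being the all-ones matrix `J`). -/
theorem statement11 {d : ℕ} {V : Type*} [Fintype V] [DecidableEq V]
    (S : SymmAssocScheme d V) (hd : 2 ≤ d)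
    (hθ : Function.Injective fun j : Fin (d + 1) => S.Q 1 j)
    (l : Fin (d + 1)) (hl : 2 ≤ (l : ℕ))
    (hK : ∀ i : Fin (d + 1), i ≠ 0 → S.K i = -S.P i l) :
    ∀ j : ℕ, j < d →
      (Matrix.of fun x y : V => ((Fintype.card V : ℂ) * S.E 1 x y) ^ j) * S.E l = 0 :=
  statement11_general S hθ l hK
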